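/- Let 1 → H → G → Q → 1 be an extension of countable discrete groups with proper length functions. If H and Q are both strongly embeddable, then G is strongly embeddable. -/

import Mathlib

/-! Identify `G` with `(G ⧸ H) × H` through coset representatives. Given embeddings `α` of the
quotient and `γ` of `H`, send `x` to the vector whose restriction to the coset `q` is
`α (x H) q • γ (σ x q)`, where `σ x q ∈ H` marks a point of `q` nearly closest to `x`; it is a
unit vector because each `γ` is. If `x` and `y` are close, the `α` factors are close, and on the
cosets near `y H`, which carry almost all the mass of `α (y H)`, the points `σ x q` and `σ y q`
are close, so the `γ` factors are close too. The mass far from `x` sits either on cosets far from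
`x H` or, within a near coset, far from `σ x q`; both pieces are small by the decay of `α` and of
`γ`. -/

open Metric Filter
noncomputable section

/-- The metric on a group is left-invariant. -/
def LeftInvariantMetric (G : Type*) [Group G] [MetricSpace G] : Prop :=
  ∀ g a b : G, dist (g * a) (g * b) = dist a b

/-- The metric is proper: closed balls are finite. -/
def ProperMetric (G : Type*) [MetricSpace G] : Prop :=
  ∀ (x : G) (r : ℝ), (Metric.closedBall x r).Finite

/-- `X` is strongly embeddable: for all `R, ε > 0` there is a unit-norm map
`β : X → ℓ²(X)` with `‖β x - β y‖ ≤ ε` when `dist x y ≤ R`, and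
`lim_{S→∞} sup_x Σ_{w ∉ B_S(x)} |β x w|² = 0`. -/
def StronglyEmbeddable (X : Type*) [MetricSpace X] : Prop :=
  ∀ R > (0:ℝ), ∀ ε > (0:ℝ), ∃ β : X → lp (fun _ : X => ℝ) 2,
    (∀ x : X, ‖β x‖ = 1) ∧
    (∀ x y : X, dist x y ≤ R → ‖β x - β y‖ ≤ ε) ∧
    (∀ δ > (0:ℝ), ∃ S : ℝ, ∀ x : X,
      (∑' w : {w : X // S < dist x w}, (β x w.1) ^ 2) ≤ δ)

theorem Summable.tsum_subtype_mono {ι : Type*} {f : ι → ℝ} (hf : Summable f)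
    (hf0 : ∀ i, 0 ≤ f i) {s t : Set ι} (hst : s ⊆ t) : ∑' i : s, f i ≤ ∑' i : t, f i := by
  rw [tsum_subtype s f, tsum_subtype t f]
  exact (hf.indicator s).tsum_le_tsum (Set.indicator_le_indicator_of_subset hst hf0)
    (hf.indicator t)

theorem tsum_subtype_le_of_fiberwise {ι κ X : Type*} (e : ι × κ ≃ X) {f : X → ℝ}
    (hf : Summable f) (s : Set X) {c : ι → ℝ} (hc : Summable c)
    (h : ∀ i, ∑' k, s.indicator f (e (i, k)) ≤ c i) : ∑' x : s, f x ≤ ∑' i, c i := by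
  have hg : Summable fun p => s.indicator f (e p) := e.summable_iff.2 (hf.indicator s)
  calc ∑' x : s, f x = ∑' x, s.indicator f x := tsum_subtype s f
    _ = ∑' p, s.indicator f (e p) := (e.tsum_eq _).symm
    _ = ∑' i, ∑' k, s.indicator f (e (i, k)) := hg.tsum_prod
    _ ≤ ∑' i, c i := hg.prod.tsum_le_tsum h hc

namespace lp

variable {ι κ X E : Type*} [NormedAddCommGroup E]

theorem hasSum_norm_sq (f : lp (fun _ : ι => E) 2) : HasSum (fun i => ‖f i‖ ^ 2) (‖f‖ ^ 2) := by
  simpa using lp.hasSum_norm (p := 2) (by norm_num) f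

theorem hasSum_sq (f : lp (fun _ : ι => ℝ) 2) : HasSum (fun i => f i ^ 2) (‖f‖ ^ 2) := by
  simpa using hasSum_norm_sq f

theorem memℓp_two_of_hasSum {f : ι → E} {c : ℝ} (hf : HasSum (fun i => ‖f i‖ ^ 2) c) :
    Memℓp f 2 :=
  memℓp_gen (by simpa using hf.summable)

theorem norm_eq_of_hasSum {f : lp (fun _ : ι => E) 2} {c : ℝ} (hc : 0 ≤ c)
    (h : HasSum (fun i => ‖f i‖ ^ 2) (c ^ 2)) : ‖f‖ = c :=
  (sq_eq_sq₀ (norm_nonneg f) hc).1 ((hasSum_norm_sq f).unique h)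

theorem hasSum_norm_sq_prod (F : lp (fun _ : ι => lp (fun _ : κ => E) 2) 2) :
    HasSum (fun p : ι × κ => ‖F p.1 p.2‖ ^ 2) (‖F‖ ^ 2) := by
  have hfib (i : ι) : ∑' k, ‖F i k‖ ^ 2 = ‖F i‖ ^ 2 := (hasSum_norm_sq (F i)).tsum_eq
  have hs : Summable fun p : ι × κ => ‖F p.1 p.2‖ ^ 2 :=
    (summable_prod_of_nonneg fun _ => by positivity).2
      ⟨fun i => (hasSum_norm_sq (F i)).summable,
        by simpa only [hfib] using (hasSum_norm_sq F).summable⟩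
  convert hs.hasSum using 1
  rw [hs.tsum_prod, ← (hasSum_norm_sq F).tsum_eq]
  simp only [hfib]

theorem hasSum_norm_sq_uncurry (e : ι × κ ≃ X) (F : lp (fun _ : ι => lp (fun _ : κ => E) 2) 2) :
    HasSum (fun x => ‖F (e.symm x).1 (e.symm x).2‖ ^ 2) (‖F‖ ^ 2) := by
  rw [← e.hasSum_iff]
  simpa [Function.comp_def] using hasSum_norm_sq_prod F

variable [NormedSpace ℝ E]

def smulFamily (u : ι → E) (hu : ∀ i, ‖u i‖ = 1) :
    lp (fun _ : ι => ℝ) 2 →ₗᵢ[ℝ] lp (fun _ : ι => E) 2 where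
  toFun a := ⟨fun i => a i • u i,
    memℓp_two_of_hasSum (by simpa [norm_smul, hu] using hasSum_norm_sq a)⟩
  map_add' a b := lp.ext <| funext fun i => add_smul (a i) (b i) (u i)
  map_smul' c a := lp.ext <| funext fun i => mul_smul c (a i) (u i)
  norm_map' a := norm_eq_of_hasSum (norm_nonneg a) (by simpa [norm_smul, hu] using hasSum_norm_sq a)

@[simp]
theorem smulFamily_apply (u : ι → E) (hu : ∀ i, ‖u i‖ = 1) (a : lp (fun _ : ι => ℝ) 2) (i : ι) :
    smulFamily u hu a i = a i • u i := rfl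

def uncurry (e : ι × κ ≃ X) :
    lp (fun _ : ι => lp (fun _ : κ => E) 2) 2 →ₗᵢ[ℝ] lp (fun _ : X => E) 2 where
  toFun F := ⟨fun x => F (e.symm x).1 (e.symm x).2,
    memℓp_two_of_hasSum (hasSum_norm_sq_uncurry e F)⟩
  map_add' _ _ := rfl
  map_smul' _ _ := rfl
  norm_map' F := norm_eq_of_hasSum (norm_nonneg F) (hasSum_norm_sq_uncurry e F)

@[simp]
theorem uncurry_apply (e : ι × κ ≃ X) (F : lp (fun _ : ι => lp (fun _ : κ => E) 2) 2) (i : ι)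
    (k : κ) : uncurry e F (e (i, k)) = F i k := by
  change F (e.symm (e (i, k))).1 (e.symm (e (i, k))).2 = F i k
  rw [e.symm_apply_apply]

theorem norm_smulFamily_sub_smulFamily_sq_le (b : lp (fun _ : ι => ℝ) 2) {u v : ι → E}
    (hu : ∀ i, ‖u i‖ = 1) (hv : ∀ i, ‖v i‖ = 1) (t : Set ι) {η : ℝ}
    (hclose : ∀ i ∉ t, ‖u i - v i‖ ≤ η) :
    ‖smulFamily u hu b - smulFamily v hv b‖ ^ 2 ≤ η ^ 2 * ‖b‖ ^ 2 + 4 * ∑' i : t, b i ^ 2 := by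
  have hpt (i : ι) : ‖(smulFamily u hu b - smulFamily v hv b) i‖ ^ 2 ≤
      η ^ 2 * b i ^ 2 + 4 * t.indicator (fun i => b i ^ 2) i := by
    have hi : ‖(smulFamily u hu b - smulFamily v hv b) i‖ = |b i| * ‖u i - v i‖ := by
      simp [← smul_sub, norm_smul]
    rw [hi, mul_pow, sq_abs]
    by_cases hit : i ∈ t
    · have h2 : ‖u i - v i‖ ≤ 2 := (norm_sub_le _ _).trans (by rw [hu, hv]; norm_num)
      have h4 : ‖u i - v i‖ ^ 2 ≤ 4 := by nlinarith [norm_nonneg (u i - v i)]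
      rw [Set.indicator_of_mem hit]
      nlinarith [mul_le_mul_of_nonneg_left h4 (sq_nonneg (b i)), sq_nonneg (b i), sq_nonneg η]
    · rw [Set.indicator_of_notMem hit, mul_zero, add_zero, mul_comm]
      gcongr
      exact hclose i hit
  rw [tsum_subtype t fun i => b i ^ 2]
  exact hasSum_le hpt (hasSum_norm_sq _)
    (((hasSum_sq b).mul_left _).add (((hasSum_sq b).summable.indicator t).hasSum.mul_left 4))

theorem tsum_sq_uncurry_smulFamily_le (e : ι × κ ≃ X) (a : lp (fun _ : ι => ℝ) 2)
    {u : ι → lp (fun _ : κ => ℝ) 2} (hu : ∀ i, ‖u i‖ = 1) (s : Set X) (t : Set ι) {δ : ℝ}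
    (hδ : 0 ≤ δ) (hfiber : ∀ i ∉ t, ∑' k : {k | e (i, k) ∈ s}, u i k ^ 2 ≤ δ) :
    ∑' x : s, uncurry e (smulFamily u hu a) x ^ 2 ≤ δ * ‖a‖ ^ 2 + ∑' i : t, a i ^ 2 := by
  have hind (i : ι) (k : κ) : s.indicator (fun x => uncurry e (smulFamily u hu a) x ^ 2) (e (i, k))
      = a i ^ 2 * {k | e (i, k) ∈ s}.indicator (fun k => u i k ^ 2) k := by
    by_cases hk : e (i, k) ∈ s <;> simp [Set.indicator, hk, mul_pow]
  have hfib (i : ι) : ∑' k, s.indicator (fun x => uncurry e (smulFamily u hu a) x ^ 2) (e (i, k))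
      ≤ δ * a i ^ 2 + t.indicator (fun i => a i ^ 2) i := by
    simp_rw [hind, tsum_mul_left, ← tsum_subtype]
    by_cases hit : i ∈ t
    · have h1 : ∑' k : {k | e (i, k) ∈ s}, u i k ^ 2 ≤ 1 := by
        simpa [(hasSum_sq (u i)).tsum_eq, hu] using
          Summable.tsum_subtype_le _ _ (fun _ => sq_nonneg _) (hasSum_sq (u i)).summable
      rw [Set.indicator_of_mem hit]
      nlinarith [sq_nonneg (a i)]
    · rw [Set.indicator_of_notMem hit]
      nlinarith [hfiber i hit, sq_nonneg (a i)]
  calc ∑' x : s, uncurry e (smulFamily u hu a) x ^ 2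
      ≤ ∑' i, (δ * a i ^ 2 + t.indicator (fun i => a i ^ 2) i) :=
        tsum_subtype_le_of_fiberwise e (hasSum_sq _).summable s
          (((hasSum_sq a).summable.mul_left δ).add ((hasSum_sq a).summable.indicator t)) hfib
    _ = δ * ‖a‖ ^ 2 + ∑' i : t, a i ^ 2 := by
        rw [((hasSum_sq a).summable.mul_left δ).tsum_add ((hasSum_sq a).summable.indicator t),
          tsum_mul_left, (hasSum_sq a).tsum_eq, tsum_subtype t fun i => a i ^ 2]

end lp

section Fibration

variable {X Q K : Type*} [MetricSpace X] [MetricSpace Q] [MetricSpace K] (e : Q × K ≃ X)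

def fiberedEmbedding (α : Q → lp (fun _ : Q => ℝ) 2) {γ : K → lp (fun _ : K => ℝ) 2}
    (hγ : ∀ k, ‖γ k‖ = 1) (σ : X → Q → K) (x : X) : lp (fun _ : X => ℝ) 2 :=
  lp.uncurry e (lp.smulFamily (fun q => γ (σ x q)) (fun _ => hγ _) (α (e.symm x).1))

section

variable {e} {C : ℝ} {σ : X → Q → K}

theorem dist_section_le (hπ : ∀ x y, dist (e.symm x).1 (e.symm y).1 ≤ dist x y)
    (hfib : ∀ q k k', dist (e (q, k)) (e (q, k')) = dist k k')
    (hσ : ∀ x q, dist x (e (q, σ x q)) ≤ dist (e.symm x).1 q + C) (x y : X) (q : Q) :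
    dist (σ x q) (σ y q) ≤ 2 * (dist x y + dist (e.symm y).1 q + C) := by
  rw [← hfib q]
  have := dist_triangle4 (e (q, σ x q)) x y (e (q, σ y q))
  have := dist_triangle (e.symm x).1 (e.symm y).1 q
  linarith [hσ x q, hσ y q, hπ x y, dist_comm x (e (q, σ x q))]

theorem dist_le_dist_section_add (hfib : ∀ q k k', dist (e (q, k)) (e (q, k')) = dist k k')
    (hσ : ∀ x q, dist x (e (q, σ x q)) ≤ dist (e.symm x).1 q + C) (x : X) (q : Q) (k : K) :
    dist x (e (q, k)) ≤ dist (e.symm x).1 q + C + dist (σ x q) k := by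
  have := dist_triangle x (e (q, σ x q)) (e (q, k))
  rw [hfib] at this
  linarith [hσ x q]

variable {α : Q → lp (fun _ : Q => ℝ) 2} {γ : K → lp (fun _ : K => ℝ) 2} (hγ : ∀ k, ‖γ k‖ = 1)

theorem norm_fiberedEmbedding_sub_le (hπ : ∀ x y, dist (e.symm x).1 (e.symm y).1 ≤ dist x y)
    (hfib : ∀ q k k', dist (e (q, k)) (e (q, k')) = dist k k')
    (hσ : ∀ x q, dist x (e (q, σ x q)) ≤ dist (e.symm x).1 q + C) {R S ε : ℝ} (hε : 0 ≤ ε)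
    (hα : ∀ z, ‖α z‖ = 1) (hαR : ∀ z w, dist z w ≤ R → ‖α z - α w‖ ≤ ε)
    (hαS : ∀ z, ∑' q : {q // S < dist z q}, α z q ^ 2 ≤ ε ^ 2)
    (hγR : ∀ k k', dist k k' ≤ 2 * (R + S + C) → ‖γ k - γ k'‖ ≤ ε) {x y : X}
    (hxy : dist x y ≤ R) :
    ‖fiberedEmbedding e α hγ σ x - fiberedEmbedding e α hγ σ y‖ ≤ 4 * ε := by
  set U := lp.uncurry (E := ℝ) e
  set Dx := lp.smulFamily (fun q => γ (σ x q)) (fun _ => hγ _)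
  set Dy := lp.smulFamily (fun q => γ (σ y q)) (fun _ => hγ _)
  set a := α (e.symm x).1
  set b := α (e.symm y).1
  have hsplit : fiberedEmbedding e α hγ σ x - fiberedEmbedding e α hγ σ y =
      U (Dx (a - b)) + U (Dx b - Dy b) := by
    simp only [fiberedEmbedding, map_sub]
    abel
  have hbase : ‖U (Dx (a - b))‖ ≤ ε := by
    rw [LinearIsometry.norm_map, LinearIsometry.norm_map]
    exact hαR _ _ ((hπ x y).trans hxy)
  have hfiber : ‖U (Dx b - Dy b)‖ ≤ 3 * ε := by
    rw [LinearIsometry.norm_map]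
    refine le_of_pow_le_pow_left₀ two_ne_zero (by positivity) ?_
    calc ‖Dx b - Dy b‖ ^ 2 ≤ ε ^ 2 * ‖b‖ ^ 2 + 4 * ∑' q : {q | S < dist (e.symm y).1 q}, b q ^ 2 :=
          lp.norm_smulFamily_sub_smulFamily_sq_le b _ _ _ fun q hq => hγR _ _ <| by
            have hq : dist (e.symm y).1 q ≤ S := not_lt.1 hq
            linarith [dist_section_le hπ hfib hσ x y q]
      _ ≤ ε ^ 2 * 1 + 4 * ε ^ 2 := by
          rw [hα, one_pow]
          gcongr
          exact hαS _
      _ ≤ (3 * ε) ^ 2 := by nlinarith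
  calc _ = ‖U (Dx (a - b)) + U (Dx b - Dy b)‖ := by rw [hsplit]
    _ ≤ ε + 3 * ε := (norm_add_le _ _).trans (add_le_add hbase hfiber)
    _ = 4 * ε := by ring

theorem tsum_sq_fiberedEmbedding_le (hfib : ∀ q k k', dist (e (q, k)) (e (q, k')) = dist k k')
    (hσ : ∀ x q, dist x (e (q, σ x q)) ≤ dist (e.symm x).1 q + C) {S T δ₁ δ₂ : ℝ}
    (hδ₂ : 0 ≤ δ₂) (hα : ∀ z, ‖α z‖ = 1) (hαS : ∀ z, ∑' q : {q // S < dist z q}, α z q ^ 2 ≤ δ₁)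
    (hγT : ∀ k, ∑' k' : {k' // T < dist k k'}, γ k k' ^ 2 ≤ δ₂) (x : X) :
    ∑' w : {w // S + C + T < dist x w}, fiberedEmbedding e α hγ σ x w ^ 2 ≤ δ₂ + δ₁ := by
  have := lp.tsum_sq_uncurry_smulFamily_le e (α (e.symm x).1) (fun _ => hγ _)
    {w | S + C + T < dist x w} {q | S < dist (e.symm x).1 q} hδ₂ fun q hq =>
      ((lp.hasSum_sq _).summable.tsum_subtype_mono (fun _ => sq_nonneg _) fun k hk => by
        have hq : dist (e.symm x).1 q ≤ S := not_lt.1 hq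
        have hk : S + C + T < dist x (e (q, k)) := hk
        show T < dist (σ x q) k
        linarith [dist_le_dist_section_add hfib hσ x q k]).trans (hγT _)
  rw [hα, one_pow, mul_one] at this
  exact this.trans (add_le_add le_rfl (hαS _))

end

theorem StronglyEmbeddable.of_equiv_prod (e : Q × K ≃ X) (C : ℝ)
    (hπ : ∀ x y, dist (e.symm x).1 (e.symm y).1 ≤ dist x y)
    (hfib : ∀ q k k', dist (e (q, k)) (e (q, k')) = dist k k')
    (hnear : ∀ x q, ∃ x', (e.symm x').1 = q ∧ dist x x' ≤ dist (e.symm x).1 q + C)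
    (hQ : StronglyEmbeddable Q) (hK : StronglyEmbeddable K) : StronglyEmbeddable X := by
  choose c hcq hc using hnear
  set σ : X → Q → K := fun x q => (e.symm (c x q)).2
  have hσ (x : X) (q : Q) : dist x (e (q, σ x q)) ≤ dist (e.symm x).1 q + C := by
    have hec : e (q, σ x q) = c x q :=
      e.symm.injective <| by rw [e.symm_apply_apply]; exact Prod.ext (hcq x q).symm rfl
    exact hec ▸ hc x q
  intro R hR ε hε
  obtain ⟨α, hα, hαR, hαtail⟩ := hQ R hR (ε / 4) (by positivity)
  obtain ⟨S, hS⟩ := hαtail ((ε / 4) ^ 2) (by positivity)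
  obtain ⟨γ, hγ, hγR, hγtail⟩ :=
    hK (max (2 * (R + S + C)) R) (lt_max_of_lt_right hR) (ε / 4) (by positivity)
  refine ⟨fiberedEmbedding e α hγ σ, fun x => by simp [fiberedEmbedding, hα], fun x y hxy => ?_,
    fun δ hδ => ?_⟩
  · have := norm_fiberedEmbedding_sub_le hγ hπ hfib hσ (by positivity) hα hαR hS
      (fun k k' h => hγR k k' (h.trans (le_max_left _ _))) hxy
    linarith
  · obtain ⟨S', hS'⟩ := hαtail (δ / 2) (by positivity)
    obtain ⟨T, hT⟩ := hγtail (δ / 2) (by positivity)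
    exact ⟨S' + C + T, fun x =>
      (tsum_sq_fiberedEmbedding_le hγ hfib hσ (by positivity) hα hS' hT x).trans (by linarith)⟩

end Fibration

namespace Subgroup

variable {G : Type*} [Group G] (H : Subgroup G)

def quotientProdEquiv : (G ⧸ H) × H ≃ G where
  toFun p := p.1.out * p.2
  invFun g := (g, ⟨(g : G ⧸ H).out⁻¹ * g, QuotientGroup.eq.mp (QuotientGroup.out_eq' _)⟩)
  left_inv p := by
    have hmk : ((p.1.out * p.2 : G) : G ⧸ H) = p.1 := by
      rw [QuotientGroup.mk_mul_of_mem _ p.2.2, QuotientGroup.out_eq']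
    ext
    · exact hmk
    · simp [hmk]
  right_inv g := by simp

def IsQuotientMetric [MetricSpace G] [MetricSpace (G ⧸ H)] : Prop :=
  ∀ a b : G, dist (QuotientGroup.mk a : G ⧸ H) (QuotientGroup.mk b) =
    sInf {r : ℝ | ∃ a' b' : G, (QuotientGroup.mk a' : G ⧸ H) = QuotientGroup.mk a ∧
      (QuotientGroup.mk b' : G ⧸ H) = QuotientGroup.mk b ∧ r = dist a' b'}

variable {H} [MetricSpace G] [MetricSpace (G ⧸ H)]

theorem IsQuotientMetric.dist_mk_le (hq : H.IsQuotientMetric) (a b : G) :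
    dist (a : G ⧸ H) b ≤ dist a b := by
  rw [hq]
  refine csInf_le ⟨0, ?_⟩ ⟨a, b, rfl, rfl, rfl⟩
  rintro _ ⟨a', b', -, -, rfl⟩
  exact dist_nonneg

theorem IsQuotientMetric.exists_mk_eq_dist_lt [H.Normal] (hq : H.IsQuotientMetric)
    (hleft : LeftInvariantMetric G) (x : G) (q : G ⧸ H) {η : ℝ} (hη : 0 < η) :
    ∃ c : G, (c : G ⧸ H) = q ∧ dist x c < dist (x : G ⧸ H) q + η := by
  obtain ⟨b, rfl⟩ := QuotientGroup.mk_surjective q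
  obtain ⟨_, ⟨a', b', ha', hb', rfl⟩, hlt⟩ := Real.lt_sInf_add_pos
    (s := {r | ∃ a' b' : G, (a' : G ⧸ H) = x ∧ (b' : G ⧸ H) = b ∧ r = dist a' b'})
    ⟨_, x, b, rfl, rfl, rfl⟩ hη
  -- Translating by `x * a'⁻¹` moves `a'` to `x` and, `H` being normal, keeps `b'` in its coset.
  refine ⟨x * a'⁻¹ * b', by simp [ha', hb'], ?_⟩
  have hdist : dist x (x * a'⁻¹ * b') = dist a' b' := by simpa using hleft (x * a'⁻¹) a' b'
  rwa [hq, hdist]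

end Subgroup

theorem stronglyEmbeddable_extension_general (G : Type) [Group G]
    [MetricSpace G] (hleft : LeftInvariantMetric G)
    (H : Subgroup G) [H.Normal] [MetricSpace (G ⧸ H)]
    (hq : ∀ a b : G, dist (QuotientGroup.mk a : G ⧸ H) (QuotientGroup.mk b) =
      sInf {r : ℝ | ∃ a' b' : G, (QuotientGroup.mk a' : G ⧸ H) = QuotientGroup.mk a ∧
        (QuotientGroup.mk b' : G ⧸ H) = QuotientGroup.mk b ∧ r = dist a' b'})
    (hH : StronglyEmbeddable H) (hQ : StronglyEmbeddable (G ⧸ H)) :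
    StronglyEmbeddable G := by
  have hq : H.IsQuotientMetric := hq
  refine StronglyEmbeddable.of_equiv_prod H.quotientProdEquiv 1 hq.dist_mk_le
    (fun q k k' => (hleft _ _ _).trans (Subtype.dist_eq k k').symm)
    (fun x q => (hq.exists_mk_eq_dist_lt hleft x q one_pos).imp fun _ hc => ⟨hc.1, hc.2.le⟩) hQ hH

/-- Strong embeddability is closed under extensions: if `H ⊴ G` is strongly
embeddable (with the restricted metric) and `G/H` is strongly embeddable (with the
quotient metric), then `G` is strongly embeddable. -/
theorem stronglyEmbeddable_extension (G : Type) [Group G] [Countable G]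
    [MetricSpace G] (hleft : LeftInvariantMetric G) (hproper : ProperMetric G)
    (H : Subgroup G) [H.Normal] [MetricSpace (G ⧸ H)]
    (hq : ∀ a b : G, dist (QuotientGroup.mk a : G ⧸ H) (QuotientGroup.mk b) =
      sInf {r : ℝ | ∃ a' b' : G, (QuotientGroup.mk a' : G ⧸ H) = QuotientGroup.mk a ∧
        (QuotientGroup.mk b' : G ⧸ H) = QuotientGroup.mk b ∧ r = dist a' b'})
    (hH : StronglyEmbeddable H) (hQ : StronglyEmbeddable (G ⧸ H)) :
    StronglyEmbeddable G :=
  stronglyEmbeddable_extension_general G hleft H hq hH hQ
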